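/- The class of languages generated by admissible signed grammars is closed under subset difference: if L₁, L₂ ⊆ Σ* are each generated by an admissible signed grammar over Σ and L₁ ⊆ L₂, then L₂ \ L₁ is generated by an admissible signed grammar over Σ. -/

import Mathlib

/-- A parse-tree node: either a terminal leaf or an internal node labeled by a
nonterminal with a list of children. -/
inductive PTree (N : Type) (T : Type) : Type where
  | leaf (t : T) : PTree N T
  | node (A : N) (children : List (PTree N T)) : PTree N T

namespace PTree

variable {N T : Type}

/-- The symbol (nonterminal or terminal) labeling the root of a tree. -/
def toSymbol : PTree N T → N ⊕ T
  | leaf t => Sum.inr t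
  | node A _ => Sum.inl A

/-- The yield of a parse tree: the word spelled by its leaves. -/
def yield : PTree N T → List T
  | leaf t => [t]
  | node _ cs => cs.attach.flatMap (fun c => yield c.1)
decreasing_by simp only [PTree.node.sizeOf_spec]; have h := List.sizeOf_lt_of_mem c.2; omega

/-- The sign of a parse tree w.r.t. a sign assignment on productions:
the product of the signs of the productions used at its nodes. -/
def sign (σ : N × List (N ⊕ T) → ℤ) : PTree N T → ℤ
  | leaf _ => 1
  | node A cs => σ (A, cs.map toSymbol) * (cs.attach.map (fun c => sign σ c.1)).prod
decreasing_by simp only [PTree.node.sizeOf_spec]; have h := List.sizeOf_lt_of_mem c.2; omega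

/-- Validity of a parse tree w.r.t. a set of productions: at every internal node,
the node label together with the list of symbols of its children is a production. -/
inductive Valid (R : Set (N × List (N ⊕ T))) : PTree N T → Prop where
  | leaf (t : T) : Valid R (PTree.leaf t)
  | node (A : N) (cs : List (PTree N T)) :
      (A, cs.map toSymbol) ∈ R → (∀ c ∈ cs, Valid R c) → Valid R (PTree.node A cs)

end PTree

/-- A signed grammar over a (finite) terminal alphabet `T`: a context-free grammar
with finitely many nonterminals and productions, together with a sign `1` or `-1`
attached to each production. -/
structure SignedGrammar (T : Type) : Type 1 where
  /-- the type of nonterminals -/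
  N : Type
  finN : Finite N
  /-- the start symbol -/
  start : N
  /-- the productions `A → α`, `α ∈ (N ∪ T)*` -/
  rules : Set (N × List (N ⊕ T))
  finRules : rules.Finite
  /-- the sign of each production -/
  sign : N × List (N ⊕ T) → ℤ
  sign_valid : ∀ r ∈ rules, sign r = 1 ∨ sign r = -1

namespace SignedGrammar

variable {T : Type}

/-- A parse tree over the grammar: a valid tree whose root is labeled by the start symbol. -/
def IsParseTree (G : SignedGrammar T) (t : PTree G.N T) : Prop :=
  PTree.Valid G.rules t ∧ t.toSymbol = Sum.inl G.start

/-- The set of parse trees over `G` with yield `w`. -/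
def parseTreesOf (G : SignedGrammar T) (w : List T) : Set (PTree G.N T) :=
  {t | G.IsParseTree t ∧ t.yield = w}

/-- `G` is admissible if every word has only finitely many parse trees. -/
def Admissible (G : SignedGrammar T) : Prop :=
  ∀ w : List T, (G.parseTreesOf w).Finite

/-- `n_w(G)`: the sum of the signs of all parse trees over `G` with yield `w`. -/
noncomputable def count (G : SignedGrammar T) (w : List T) : ℤ :=
  ∑ᶠ t ∈ G.parseTreesOf w, t.sign G.sign

/-- `G` generates the language `L` if `G` is admissible, `n_w(G) = 1` for every
`w ∈ L` and `n_w(G) = 0` for every `w ∉ L`. -/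
def Generates (G : SignedGrammar T) (L : Language T) : Prop :=
  G.Admissible ∧ (∀ w ∈ L, G.count w = 1) ∧ (∀ w ∉ L, G.count w = 0)

/-- An ordinary context-free grammar: every production has sign `+1`. -/
def Ordinary (G : SignedGrammar T) : Prop :=
  ∀ r ∈ G.rules, G.sign r = 1

/-- The language generated by `G` in the usual sense: all yields of parse trees. -/
def language (G : SignedGrammar T) : Language T :=
  {w | ∃ t : PTree G.N T, G.IsParseTree t ∧ t.yield = w}

/-- `G` is unambiguous if every word has at most one parse tree. -/
def Unambiguous (G : SignedGrammar T) : Prop :=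
  ∀ t₁ t₂ : PTree G.N T, G.IsParseTree t₁ → G.IsParseTree t₂ →
    t₁.yield = t₂.yield → t₁ = t₂

/-- The number of parse trees of `G` with yield `w` (degree of ambiguity of `w`). -/
noncomputable def ambCount (G : SignedGrammar T) (w : List T) : ℕ :=
  Nat.card {t : PTree G.N T // t ∈ G.parseTreesOf w}

end SignedGrammar

/-!
Put `G₁` and `G₂` side by side on disjoint nonterminals and add a fresh start symbol `S` with
the productions `S → S₁` of sign `-1` and `S → S₂` of sign `+1`. A parse tree of the new grammar
is a parse tree of `G₁` or of `G₂` below the new root, with its sign multiplied by the sign of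
the root production, so `n_w = n_w(G₂) - n_w(G₁)`. Since `L₁ ⊆ L₂`, this is `1` on `L₂ \ L₁`
and `0` elsewhere.
-/

open Function Set

namespace PTree

variable {N N' T : Type}

@[induction_eliminator]
theorem induction {motive : PTree N T → Prop} (leaf : ∀ a, motive (leaf a))
    (node : ∀ A cs, (∀ c ∈ cs, motive c) → motive (node A cs)) : ∀ t, motive t
  | .leaf a => leaf a
  | .node A cs => node A cs fun c _ => induction leaf node c

theorem yield_node (A : N) (cs : List (PTree N T)) : (node A cs).yield = cs.flatMap yield := by
  rw [yield, List.flatMap_def, List.flatMap_def, List.attach_map_val]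

theorem sign_node (σ : N × List (N ⊕ T) → ℤ) (A : N) (cs : List (PTree N T)) :
    (node A cs).sign σ = σ (A, cs.map toSymbol) * (cs.map (sign σ)).prod := by
  rw [sign, List.attach_map_val]

theorem valid_node_iff {R : Set (N × List (N ⊕ T))} {A : N} {cs : List (PTree N T)} :
    Valid R (node A cs) ↔ (A, cs.map toSymbol) ∈ R ∧ ∀ c ∈ cs, Valid R c :=
  ⟨fun | .node _ _ hr hcs => ⟨hr, hcs⟩, fun ⟨hr, hcs⟩ => .node A cs hr hcs⟩

theorem yield_node_singleton (A : N) (c : PTree N T) : (node A [c]).yield = c.yield := by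
  rw [yield_node, List.flatMap_singleton]

theorem valid_node_singleton_iff {R : Set (N × List (N ⊕ T))} {A : N} {c : PTree N T} :
    Valid R (node A [c]) ↔ (A, [c.toSymbol]) ∈ R ∧ Valid R c := by
  simp only [valid_node_iff, List.map_singleton, List.mem_singleton, forall_eq]

theorem sign_node_singleton (σ : N × List (N ⊕ T) → ℤ) (A : N) (c : PTree N T) :
    (node A [c]).sign σ = σ (A, [c.toSymbol]) * c.sign σ := by
  rw [sign_node, List.map_singleton, List.map_singleton, List.prod_singleton]

def map (f : N → N') : PTree N T → PTree N' T
  | leaf a => leaf a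
  | node A cs => node (f A) (cs.map (map f))

def mapRule (f : N → N') : N × List (N ⊕ T) → N' × List (N' ⊕ T) :=
  Prod.map f (List.map (Sum.map f id))

variable {f : N → N'}

theorem mapRule_injective (hf : Injective f) : Injective (mapRule (T := T) f) :=
  hf.prodMap (List.map_injective_iff.2 (Sum.map_injective.2 ⟨hf, injective_id⟩))

theorem toSymbol_map (t : PTree N T) : (t.map f).toSymbol = Sum.map f id t.toSymbol := by
  cases t <;> rw [map] <;> rfl

theorem mapRule_node (A : N) (cs : List (PTree N T)) :
    mapRule f (A, cs.map toSymbol) = (f A, (cs.map (map f)).map toSymbol) := by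
  simp only [mapRule, Prod.map, List.map_map, comp_def, toSymbol_map]

theorem yield_map (t : PTree N T) : (t.map f).yield = t.yield := by
  induction t with
  | leaf a => rw [map, yield, yield]
  | node A cs ih => rw [map, yield_node, yield_node, List.flatMap_map]; exact List.flatMap_congr ih

theorem sign_map {σ : N × List (N ⊕ T) → ℤ} {σ' : N' × List (N' ⊕ T) → ℤ}
    (hσ : ∀ r, σ' (mapRule f r) = σ r) (t : PTree N T) : (t.map f).sign σ' = t.sign σ := by
  induction t with
  | leaf a => rw [map, sign, sign]
  | node A cs ih =>
    rw [map, sign_node, sign_node, ← mapRule_node, hσ, List.map_map]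
    congr 2
    exact List.map_congr_left ih

theorem leftInverse_map {g : N' → N} (h : LeftInverse g f) :
    LeftInverse (map (T := T) g) (map f) := by
  intro t
  induction t with
  | leaf a => rw [map, map]
  | node A cs ih =>
    rw [map, map, List.map_map, h A]
    exact congrArg _ ((List.map_congr_left ih).trans (List.map_id cs))

theorem map_injective [Nonempty N] (hf : Injective f) : Injective (map (T := T) f) :=
  (leftInverse_map (leftInverse_invFun hf)).injective

theorem Valid.map {R : Set (N × List (N ⊕ T))} {R' : Set (N' × List (N' ⊕ T))}
    (hR : MapsTo (mapRule f) R R') {t : PTree N T} (ht : Valid R t) : Valid R' (t.map f) := by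
  induction t with
  | leaf a => rw [PTree.map]; exact .leaf a
  | node A cs ih =>
    obtain ⟨hr, hcs⟩ := valid_node_iff.1 ht
    rw [PTree.map]
    refine valid_node_iff.2 ⟨?_, ?_⟩
    · rw [← mapRule_node]; exact hR hr
    · simp only [List.mem_map]
      rintro _ ⟨c, hc, rfl⟩
      exact ih c hc (hcs c hc)

theorem exists_map_eq_of_valid (hf : Injective f) {R : Set (N × List (N ⊕ T))}
    {R' : Set (N' × List (N' ⊕ T))} (hR : ∀ r' ∈ R', r'.1 ∈ range f → r' ∈ mapRule f '' R)
    {t' : PTree N' T} (ht' : Valid R' t') (hroot : t'.toSymbol ∈ range (Sum.map f id)) :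
    ∃ t, Valid R t ∧ t.map f = t' := by
  induction t' with
  | leaf a => exact ⟨leaf a, .leaf a, by rw [map]⟩
  | node A' cs ih =>
    obtain ⟨hr, hcs⟩ := valid_node_iff.1 ht'
    obtain ⟨⟨A, β⟩, hrR, hβ⟩ := hR _ hr <| by
      obtain ⟨_ | _, hs⟩ := hroot <;> cases hs
      exact ⟨_, rfl⟩
    obtain rfl : f A = A' := congrArg Prod.fst hβ
    have hβs : β.map (Sum.map f id) = cs.map toSymbol := congrArg Prod.snd hβ
    have hchildren : cs ∈ range (List.map fun d : {d // Valid R d} => d.1.map f) := by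
      rw [Set.range_list_map]
      intro c hc
      have hroot_c : c.toSymbol ∈ range (Sum.map f id) := by
        obtain ⟨b, -, hb⟩ := List.mem_map.1 (hβs ▸ List.mem_map_of_mem hc)
        exact ⟨b, hb⟩
      obtain ⟨d, hd, rfl⟩ := ih c hc (hcs c hc) hroot_c
      exact ⟨⟨d, hd⟩, rfl⟩
    obtain ⟨ds, rfl⟩ := hchildren
    refine ⟨node A (ds.map Subtype.val), valid_node_iff.2 ⟨?_, ?_⟩, ?_⟩
    · have hβ' : mapRule f (A, β) = mapRule f (A, (ds.map Subtype.val).map toSymbol) := by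
        rw [hβ, mapRule_node]; simp only [List.map_map]; rfl
      rwa [← mapRule_injective hf hβ']
    · simp only [List.mem_map]
      rintro _ ⟨d, -, rfl⟩
      exact d.2
    · rw [map, List.map_map]; rfl

theorem valid_and_toSymbol_eq_iff (hf : Injective f) {R : Set (N × List (N ⊕ T))}
    {R' : Set (N' × List (N' ⊕ T))} (hR : {r' ∈ R' | r'.1 ∈ range f} = mapRule f '' R) {A : N}
    {t' : PTree N' T} :
    Valid R' t' ∧ t'.toSymbol = .inl (f A) ↔
      ∃ t, (Valid R t ∧ t.toSymbol = .inl A) ∧ t.map f = t' := by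
  have hsymb : Injective (Sum.map f (id : T → T)) := Sum.map_injective.2 ⟨hf, injective_id⟩
  constructor
  · rintro ⟨ht', hroot⟩
    obtain ⟨t, ht, rfl⟩ :=
      exists_map_eq_of_valid hf (fun r' hr' h => hR.subset ⟨hr', h⟩) ht' ⟨.inl A, hroot.symm⟩
    refine ⟨t, ⟨ht, hsymb ?_⟩, rfl⟩
    rw [← toSymbol_map, hroot]; rfl
  · rintro ⟨t, ⟨ht, hroot⟩, rfl⟩
    refine ⟨ht.map fun r hr => ?_, by rw [toSymbol_map, hroot]; rfl⟩
    exact (hR.symm.subset (mem_image_of_mem _ hr)).1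

end PTree

namespace SignedGrammar

open PTree

variable {T : Type}

theorem mem_image_map_parseTreesOf_iff {N' : Type} (G : SignedGrammar T) {f : G.N → N'}
    (hf : Injective f) {R' : Set (N' × List (N' ⊕ T))}
    (hR : {r' ∈ R' | r'.1 ∈ range f} = mapRule f '' G.rules) {w : List T} {c : PTree N' T} :
    c ∈ map f '' G.parseTreesOf w ↔ (Valid R' c ∧ c.toSymbol = .inl (f G.start)) ∧ c.yield = w := by
  constructor
  · rintro ⟨t, ⟨ht, rfl⟩, rfl⟩
    exact ⟨(valid_and_toSymbol_eq_iff hf hR).2 ⟨t, ht, rfl⟩, yield_map t⟩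
  · rintro ⟨hc, rfl⟩
    obtain ⟨t, ht, rfl⟩ := (valid_and_toSymbol_eq_iff hf hR).1 hc
    exact ⟨t, ⟨ht, (yield_map t).symm⟩, rfl⟩

variable (G₁ G₂ : SignedGrammar T) (ε₁ ε₂ : ℤˣ)

def signedSumRules : Set (Option (G₁.N ⊕ G₂.N) × List (Option (G₁.N ⊕ G₂.N) ⊕ T)) :=
  {(none, [.inl (some (.inl G₁.start))]), (none, [.inl (some (.inr G₂.start))])} ∪
    (mapRule (some ∘ .inl) '' G₁.rules ∪ mapRule (some ∘ .inr) '' G₂.rules)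

-- Only the two start productions reach the fallback, so its pattern need not pin them down.
noncomputable def signedSumSign :
    Option (G₁.N ⊕ G₂.N) × List (Option (G₁.N ⊕ G₂.N) ⊕ T) → ℤ :=
  extend (mapRule (some ∘ .inl)) G₁.sign <| extend (mapRule (some ∘ .inr)) G₂.sign fun
    | (_, [.inl (some (.inl _))]) => ε₁
    | _ => ε₂

theorem signedSumRules_sep_inl :
    {r ∈ signedSumRules G₁ G₂ | r.1 ∈ range (some ∘ .inl)} = mapRule (some ∘ .inl) '' G₁.rules := by
  ext r
  constructor
  · rintro ⟨((rfl | rfl) | hr | ⟨r, -, rfl⟩), A, hA⟩ <;> first | exact hr | cases hA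
  · rintro ⟨r, hr, rfl⟩
    exact ⟨.inr (.inl ⟨r, hr, rfl⟩), r.1, rfl⟩

theorem signedSumRules_sep_inr :
    {r ∈ signedSumRules G₁ G₂ | r.1 ∈ range (some ∘ .inr)} = mapRule (some ∘ .inr) '' G₂.rules := by
  ext r
  constructor
  · rintro ⟨((rfl | rfl) | ⟨r, -, rfl⟩ | hr), A, hA⟩ <;> first | exact hr | cases hA
  · rintro ⟨r, hr, rfl⟩
    exact ⟨.inr (.inr ⟨r, hr, rfl⟩), r.1, rfl⟩

theorem signedSumSign_start_inl :
    signedSumSign G₁ G₂ ε₁ ε₂ (none, [.inl (some (.inl G₁.start))]) = ε₁ := by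
  rw [signedSumSign, extend_apply', extend_apply'] <;> simp [mapRule]

theorem signedSumSign_start_inr :
    signedSumSign G₁ G₂ ε₁ ε₂ (none, [.inl (some (.inr G₂.start))]) = ε₂ := by
  rw [signedSumSign, extend_apply', extend_apply'] <;> simp [mapRule]

theorem signedSumSign_mapRule_inl (r : G₁.N × List (G₁.N ⊕ T)) :
    signedSumSign G₁ G₂ ε₁ ε₂ (mapRule (some ∘ .inl) r) = G₁.sign r :=
  (mapRule_injective (Option.some_injective _ |>.comp Sum.inl_injective)).extend_apply _ _ _

theorem signedSumSign_mapRule_inr (r : G₂.N × List (G₂.N ⊕ T)) :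
    signedSumSign G₁ G₂ ε₁ ε₂ (mapRule (some ∘ .inr) r) = G₂.sign r := by
  rw [signedSumSign, extend_apply',
    (mapRule_injective (Option.some_injective _ |>.comp Sum.inr_injective)).extend_apply]
  simp [mapRule, Prod.map]

noncomputable abbrev signedSum : SignedGrammar T where
  N := Option (G₁.N ⊕ G₂.N)
  finN := have := G₁.finN; have := G₂.finN; inferInstance
  start := none
  rules := signedSumRules G₁ G₂
  finRules := (toFinite _).union ((G₁.finRules.image _).union (G₂.finRules.image _))
  sign := signedSumSign G₁ G₂ ε₁ ε₂
  sign_valid := by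
    rintro r ((rfl | rfl) | ⟨r, hr, rfl⟩ | ⟨r, hr, rfl⟩)
    · rw [signedSumSign_start_inl]; exact Int.isUnit_iff.1 ε₁.isUnit
    · rw [signedSumSign_start_inr]; exact Int.isUnit_iff.1 ε₂.isUnit
    · rw [signedSumSign_mapRule_inl]; exact G₁.sign_valid r hr
    · rw [signedSumSign_mapRule_inr]; exact G₂.sign_valid r hr

theorem parseTreesOf_signedSum (w : List T) :
    (G₁.signedSum G₂ ε₁ ε₂).parseTreesOf w =
      (fun c => node none [c]) ''
        (map (some ∘ .inl) '' G₁.parseTreesOf w ∪ map (some ∘ .inr) '' G₂.parseTreesOf w) := by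
  ext t
  simp only [mem_image, mem_union,
    mem_image_map_parseTreesOf_iff G₁ (Option.some_injective _ |>.comp Sum.inl_injective)
      (signedSumRules_sep_inl G₁ G₂),
    mem_image_map_parseTreesOf_iff G₂ (Option.some_injective _ |>.comp Sum.inr_injective)
      (signedSumRules_sep_inr G₁ G₂)]
  constructor
  · rintro ⟨⟨hv, hroot⟩, rfl⟩
    cases t with
    | leaf a => cases hroot
    | node A cs =>
      cases hroot
      obtain ⟨hr, hcs⟩ := valid_node_iff.1 hv
      rcases hr with (hr | hr) | ⟨r, -, hr⟩ | ⟨r, -, hr⟩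
      · obtain ⟨c, rfl, hc⟩ := List.map_eq_singleton_iff.1 (congrArg Prod.snd hr)
        exact ⟨c, .inl ⟨⟨hcs c (.head _), hc⟩, (yield_node_singleton _ _).symm⟩, rfl⟩
      · obtain ⟨c, rfl, hc⟩ := List.map_eq_singleton_iff.1 (congrArg Prod.snd hr)
        exact ⟨c, .inr ⟨⟨hcs c (.head _), hc⟩, (yield_node_singleton _ _).symm⟩, rfl⟩
      · cases congrArg Prod.fst hr
      · cases congrArg Prod.fst hr
  · rintro ⟨c, ⟨⟨hc, hroot⟩, rfl⟩ | ⟨⟨hc, hroot⟩, rfl⟩, rfl⟩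
    · refine ⟨⟨valid_node_singleton_iff.2 ⟨?_, hc⟩, rfl⟩, yield_node_singleton _ _⟩
      rw [hroot]; exact .inl (.inl rfl)
    · refine ⟨⟨valid_node_singleton_iff.2 ⟨?_, hc⟩, rfl⟩, yield_node_singleton _ _⟩
      rw [hroot]; exact .inl (.inr rfl)

variable {G₁ G₂}

theorem Admissible.signedSum (h₁ : G₁.Admissible) (h₂ : G₂.Admissible) :
    (G₁.signedSum G₂ ε₁ ε₂).Admissible := fun w => by
  rw [parseTreesOf_signedSum]
  exact (((h₁ w).image _).union ((h₂ w).image _)).image _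

theorem count_signedSum (h₁ : G₁.Admissible) (h₂ : G₂.Admissible) (w : List T) :
    (G₁.signedSum G₂ ε₁ ε₂).count w = ε₁ * G₁.count w + ε₂ * G₂.count w := by
  have : Nonempty G₁.N := ⟨G₁.start⟩
  have : Nonempty G₂.N := ⟨G₂.start⟩
  have hinj₁ : Injective (map (T := T) (some ∘ Sum.inl : _ → Option (G₁.N ⊕ G₂.N))) :=
    map_injective (Option.some_injective _ |>.comp Sum.inl_injective)
  have hinj₂ : Injective (map (T := T) (some ∘ Sum.inr : _ → Option (G₁.N ⊕ G₂.N))) :=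
    map_injective (Option.some_injective _ |>.comp Sum.inr_injective)
  have hdisj : Disjoint (map (some ∘ Sum.inl : _ → Option (G₁.N ⊕ G₂.N)) '' G₁.parseTreesOf w)
      (map (some ∘ Sum.inr) '' G₂.parseTreesOf w) := by
    rw [disjoint_left]
    rintro _ ⟨s₁, ⟨⟨-, hs₁⟩, -⟩, rfl⟩ ⟨s₂, ⟨⟨-, hs₂⟩, -⟩, h⟩
    have := congrArg toSymbol h
    rw [toSymbol_map, toSymbol_map, hs₁, hs₂] at this
    cases this
  rw [count, parseTreesOf_signedSum, finsum_mem_image fun _ _ _ _ h => by cases h; rfl,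
    finsum_mem_union hdisj ((h₁ w).image _) ((h₂ w).image _), finsum_mem_image hinj₁.injOn,
    finsum_mem_image hinj₂.injOn, count, count, mul_finsum_mem' _ _ (h₁ w),
    mul_finsum_mem' _ _ (h₂ w)]
  congr 1 <;> refine finsum_mem_congr rfl fun s hs => ?_
  · rw [sign_node_singleton, toSymbol_map, hs.1.2, sign_map (signedSumSign_mapRule_inl G₁ G₂ ε₁ ε₂)]
    exact congrArg (· * _) (signedSumSign_start_inl G₁ G₂ ε₁ ε₂)
  · rw [sign_node_singleton, toSymbol_map, hs.1.2, sign_map (signedSumSign_mapRule_inr G₁ G₂ ε₁ ε₂)]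
    exact congrArg (· * _) (signedSumSign_start_inr G₁ G₂ ε₁ ε₂)

end SignedGrammar

theorem signed_grammar_closed_under_subset_minus_general
    (T : Type) (L₁ L₂ : Language T)
    (G₁ G₂ : SignedGrammar T) (h₁ : G₁.Generates L₁) (h₂ : G₂.Generates L₂)
    (hsub : L₁ ≤ L₂) :
    ∃ G : SignedGrammar T, G.Generates (L₂ \ L₁) := by
  obtain ⟨hadm₁, hin₁, hout₁⟩ := h₁
  obtain ⟨hadm₂, hin₂, hout₂⟩ := h₂
  refine ⟨G₁.signedSum G₂ (-1) 1, hadm₁.signedSum _ _ hadm₂, fun w hw => ?_, fun w hw => ?_⟩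
  · rw [SignedGrammar.count_signedSum _ _ hadm₁ hadm₂, hout₁ w hw.2, hin₂ w hw.1]; norm_num
  · rw [SignedGrammar.count_signedSum _ _ hadm₁ hadm₂]
    by_cases hw₁ : w ∈ L₁
    · rw [hin₁ w hw₁, hin₂ w (hsub hw₁)]; norm_num
    · rw [hout₁ w hw₁, hout₂ w fun hw₂ => hw ⟨hw₂, hw₁⟩]; norm_num

/-- Languages generated by admissible signed grammars are closed under subset difference. -/
theorem signed_grammar_closed_under_subset_minus
    (T : Type) [Fintype T] (L₁ L₂ : Language T)
    (G₁ G₂ : SignedGrammar T) (h₁ : G₁.Generates L₁) (h₂ : G₂.Generates L₂)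
    (hsub : L₁ ≤ L₂) :
    ∃ G : SignedGrammar T, G.Generates (L₂ \ L₁) :=
  signed_grammar_closed_under_subset_minus_general T L₁ L₂ G₁ G₂ h₁ h₂ hsub
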